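/- arXiv:2103.06264 — 14 statements merged into one kernel-verified Lean document; each statement's English description precedes it below -/
import Mathlib

section
/- Let n ∈ ℕ, let T be a vector of nonnegative reals of dimension n, and let L be the lattice of all vectors G of nonnegative reals of dimension n with G[i] ≤ T[i] for every i, ordered componentwise. If B₁ and B₂ are predicates on L that are each lattice-linear with respect to L, then the predicate B₁ ∧ B₂ (their pointwise conjunction) is also lattice-linear with respect to L. -/
/-- For the lattice `L` of `n`-dimensional vectors of nonnegative reals bounded
componentwise by `T`, if `B₁` and `B₂` are lattice-linear with respect to `L`, then so is
their pointwise conjunction. -/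
theorem stmt1 (n : ℕ) (T : Fin n → ℝ) (hT : ∀ i, 0 ≤ T i)
    (L : Set (Fin n → ℝ)) (hL : L = {G | ∀ i, 0 ≤ G i ∧ G i ≤ T i})
    (B₁ B₂ : (Fin n → ℝ) → Prop)
    (h1 : ∀ G ∈ L, ¬ B₁ G → ∃ j : Fin n, ∀ H ∈ L, G ≤ H → H j = G j → ¬ B₁ H)
    (h2 : ∀ G ∈ L, ¬ B₂ G → ∃ j : Fin n, ∀ H ∈ L, G ≤ H → H j = G j → ¬ B₂ H) :
    ∀ G ∈ L, ¬ (B₁ G ∧ B₂ G) →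
      ∃ j : Fin n, ∀ H ∈ L, G ≤ H → H j = G j → ¬ (B₁ H ∧ B₂ H) := by
  intro G hG hB
  rcases not_and_or.mp hB with h | h
  · obtain ⟨j, hj⟩ := h1 G hG h
    exact ⟨j, fun H hH hGH hHj hB' => hj H hH hGH hHj hB'.1⟩
  · obtain ⟨j, hj⟩ := h2 G hG h
    exact ⟨j, fun H hH hGH hHj hB' => hj H hH hGH hHj hB'.2⟩
end

section
/- Let n ∈ ℕ, let T be a vector of nonnegative reals of dimension n, and let L be the lattice of all vectors G of nonnegative reals of dimension n with G[i] ≤ T[i] for every i, ordered componentwise. If a predicate B on L is lattice-linear with respect to L, then the set of vectors in L satisfying B is closed under componentwise minimum (meet): for all G, H ∈ L, if B(G) and B(H) hold then B(G ⊓ H) holds, where (G ⊓ H)[i] = min(G[i], H[i]) for every i. -/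
/-- If a predicate `B` on the lattice `L` of `n`-dimensional vectors of nonnegative
reals bounded componentwise by `T` is lattice-linear, then the set of vectors of `L` satisfying
`B` is closed under componentwise minimum (meet). -/
theorem stmt2 (n : ℕ) (T : Fin n → ℝ) (hT : ∀ i, 0 ≤ T i)
    (L : Set (Fin n → ℝ)) (hL : L = {G | ∀ i, 0 ≤ G i ∧ G i ≤ T i})
    (B : (Fin n → ℝ) → Prop)
    (hll : ∀ G ∈ L, ¬ B G → ∃ j : Fin n, ∀ H ∈ L, G ≤ H → H j = G j → ¬ B H) :
    ∀ G ∈ L, ∀ H ∈ L, B G → B H → B (fun i => min (G i) (H i)) := by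
  intro G hG H hH hBG hBH
  by_contra hM
  set M : Fin n → ℝ := fun i => min (G i) (H i) with hMdef
  have hGL := hG; have hHL := hH
  rw [hL] at hGL hHL
  have hML : M ∈ L := by
    rw [hL]
    intro i
    exact ⟨le_min (hGL i).1 (hHL i).1, le_trans (min_le_left _ _) (hGL i).2⟩
  obtain ⟨j, hj⟩ := hll M hML hM
  have hMG : M ≤ G := fun i => min_le_left _ _
  have hMH : M ≤ H := fun i => min_le_right _ _
  rcases min_cases (G j) (H j) with ⟨heq, _⟩ | ⟨heq, _⟩
  · exact hj G hG hMG heq.symm hBG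
  · exact hj H hH hMH heq.symm hBH
end

section
/- Let n ∈ ℕ, let T be a vector of natural numbers of dimension n, and let L be the (finite) lattice of all vectors G of natural numbers of dimension n with G[i] ≤ T[i] for every i, ordered componentwise. If a predicate B on L is lattice-linear with respect to L and at least one vector in L satisfies B, then there exists a unique least vector G* ∈ L satisfying B, i.e., B(G*) holds and G* ≤ H for every H ∈ L with B(H). -/
/-- For the finite lattice `L` of `n`-dimensional vectors of natural numbers bounded
componentwise by `T`, if `B` is lattice-linear with respect to `L` and some vector of `L`
satisfies `B`, then there is a unique least vector of `L` satisfying `B`. -/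
theorem stmt3 (n : ℕ) (T : Fin n → ℕ)
    (L : Set (Fin n → ℕ)) (hL : L = {G | ∀ i, G i ≤ T i})
    (B : (Fin n → ℕ) → Prop)
    (hll : ∀ G ∈ L, ¬ B G → ∃ j : Fin n, ∀ H ∈ L, G ≤ H → H j = G j → ¬ B H)
    (hex : ∃ G ∈ L, B G) :
    ∃! Gs : Fin n → ℕ, Gs ∈ L ∧ B Gs ∧ ∀ H ∈ L, B H → Gs ≤ H := by
  obtain ⟨G0, hG0L, hG0B⟩ := hex
  set Gs : Fin n → ℕ := fun i => sInf {x | ∃ H, H ∈ L ∧ B H ∧ H i = x} with hGs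
  have hne : ∀ i, ({x | ∃ H, H ∈ L ∧ B H ∧ H i = x} : Set ℕ).Nonempty :=
    fun i => ⟨G0 i, G0, hG0L, hG0B, rfl⟩
  have hle : ∀ H ∈ L, B H → Gs ≤ H := by
    intro H hHL hHB i
    exact Nat.sInf_le ⟨H, hHL, hHB, rfl⟩
  have hGsL : Gs ∈ L := by
    rw [hL]
    intro i
    calc Gs i ≤ G0 i := hle G0 hG0L hG0B i
    _ ≤ T i := by rw [hL] at hG0L; exact hG0L i
  have hGsB : B Gs := by
    by_contra hnB
    obtain ⟨j, hj⟩ := hll Gs hGsL hnB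
    obtain ⟨H0, hH0L, hH0B, hH0j⟩ := Nat.sInf_mem (hne j)
    exact hj H0 hH0L (hle H0 hH0L hH0B) hH0j hH0B
  refine ⟨Gs, ⟨hGsL, hGsB, hle⟩, ?_⟩
  rintro G ⟨hGL, hGB, hGle⟩
  exact le_antisymm (hGle Gs hGsL hGsB) (hle G hGL hGB)
end

section
/- Fix n jobs, where job j requires time t[j] ∈ ℝ≥0 and has a set pre(j) ⊆ {1,…,n} of prerequisite jobs. Let T be a vector of nonnegative reals of dimension n and let L be the lattice of all vectors G of nonnegative reals of dimension n with G[i] ≤ T[i] for every i, ordered componentwise. Then the predicate B_jobs(G) ≡ ∀ j : (G[j] ≥ t[j]) ∧ (∀ i ∈ pre(j) : G[j] ≥ G[i] + t[j]) is lattice-linear with respect to L. -/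
/-- For `n` jobs with durations `t j ≥ 0` and prerequisite sets `pre j`, the
predicate `B_jobs(G) ≡ ∀ j, (G[j] ≥ t[j]) ∧ (∀ i ∈ pre j, G[j] ≥ G[i] + t[j])` is
lattice-linear with respect to the lattice `L` of vectors of nonnegative reals bounded
componentwise by `T`. -/
theorem stmt4 (n : ℕ) (t : Fin n → ℝ) (ht : ∀ j, 0 ≤ t j)
    (pre : Fin n → Set (Fin n))
    (T : Fin n → ℝ) (hT : ∀ i, 0 ≤ T i)
    (L : Set (Fin n → ℝ)) (hL : L = {G | ∀ i, 0 ≤ G i ∧ G i ≤ T i})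
    (B : (Fin n → ℝ) → Prop)
    (hB : ∀ G, B G ↔ ∀ j, t j ≤ G j ∧ ∀ i ∈ pre j, G i + t j ≤ G j) :
    ∀ G ∈ L, ¬ B G → ∃ j : Fin n, ∀ H ∈ L, G ≤ H → H j = G j → ¬ B H := by
  intro G _ hGB
  rw [hB] at hGB
  push_neg at hGB
  obtain ⟨j, hj⟩ := hGB
  refine ⟨j, fun H _ hGH hHj hBH => ?_⟩
  rw [hB] at hBH
  obtain ⟨h1, h2⟩ := hBH j
  obtain ⟨i, hi, hlt⟩ := hj (hHj ▸ h1)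
  have := h2 i hi
  have : G i + t j ≤ G j := le_trans (add_le_add_left (hGH i) _) (hHj ▸ this)
  exact absurd this (not_le.mpr hlt)
end

section
/- Let A be an array of n integers and define pre(j) = { i | 1 ≤ i < j and A[i] < A[j] } for each index j ∈ {1,…,n}. Let T be a vector of natural numbers of dimension n and let L be the lattice of all vectors G of natural numbers of dimension n with G[i] ≤ T[i] for every i, ordered componentwise. Then the predicate B(G) ≡ (∀ j : G[j] ≥ 1) ∧ (∀ j : ∀ i ∈ pre(j) : G[j] ≥ G[i] + 1) is lattice-linear with respect to L. -/
/-- For an array `A` of `n` integers with `pre j = {i | i < j ∧ A i < A j}`, the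
longest-increasing-subsequence predicate
`B(G) ≡ (∀ j, G[j] ≥ 1) ∧ (∀ j, ∀ i ∈ pre j, G[j] ≥ G[i] + 1)` is lattice-linear with respect
to the lattice `L` of vectors of natural numbers bounded componentwise by `T`. -/
theorem stmt6 (n : ℕ) (A : Fin n → ℤ)
    (T : Fin n → ℕ) (L : Set (Fin n → ℕ)) (hL : L = {G | ∀ i, G i ≤ T i})
    (B : (Fin n → ℕ) → Prop)
    (hB : ∀ G, B G ↔ (∀ j, 1 ≤ G j) ∧ ∀ j i : Fin n, i < j → A i < A j → G i + 1 ≤ G j) :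
    ∀ G ∈ L, ¬ B G → ∃ j : Fin n, ∀ H ∈ L, G ≤ H → H j = G j → ¬ B H := by
  intro G _ hGB
  rw [hB] at hGB
  push_neg at hGB
  by_cases h1 : ∀ j, 1 ≤ G j
  · obtain ⟨j, i, hij, hA, hlt⟩ := hGB h1
    refine ⟨j, fun H _ hGH hHj hBH => ?_⟩
    have hk := ((hB H).mp hBH).2 j i hij hA
    have hGi : G i ≤ H i := hGH i
    omega
  · push_neg at h1
    obtain ⟨j, hj⟩ := h1
    refine ⟨j, fun H _ hGH hHj hBH => ?_⟩
    have := ((hB H).mp hBH).1 j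
    omega
end

section
/- Let A be an array of n distinct integers and define pre(j) = { i | 1 ≤ i < j and A[i] < A[j] }. Let L be the lattice of all vectors G of natural numbers of dimension n with G[i] ≤ n for every i, ordered componentwise, and let B(G) ≡ (∀ j : G[j] ≥ 1) ∧ (∀ j : ∀ i ∈ pre(j) : G[j] ≥ G[i] + 1). Then the least vector G* in L satisfying B exists and satisfies, for every index j, G*[j] equals the maximum length of a strictly increasing subsequence of A[1..j] that ends at index j (i.e., the maximum cardinality of a set of indices i₁ < i₂ < ⋯ < i_m = j with A[i₁] < A[i₂] < ⋯ < A[i_m]). -/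
lemma fin_one_strictMono {α : Type*} [Preorder α] (g : Fin (0 + 1) → α) : StrictMono g := by
  intro a b h
  have ha := a.isLt
  have hb := b.isLt
  rw [Fin.lt_def] at h
  omega

lemma snoc_strictMono' {m : ℕ} {α : Type*} [Preorder α] {f : Fin (m + 1) → α} {x : α}
    (hf : StrictMono f) (hx : ∀ k, f k < x) : StrictMono (Fin.snoc f x) := by
  intro a b hab
  by_cases hb : b = Fin.last (m + 1)
  · subst hb
    obtain ⟨a', rfl⟩ := Fin.exists_castSucc_eq.mpr (Fin.ne_last_of_lt hab)
    simpa using hx a'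
  · obtain ⟨b', rfl⟩ := Fin.exists_castSucc_eq.mpr hb
    obtain ⟨a', rfl⟩ := Fin.exists_castSucc_eq.mpr (Fin.ne_last_of_lt hab)
    simpa using hf (by exact_mod_cast hab)

/-- For an array `A` of `n` distinct integers, on the lattice `L` of vectors of
natural numbers bounded componentwise by `n`, the least vector satisfying
`B(G) ≡ (∀ j, G[j] ≥ 1) ∧ (∀ j, ∀ i ∈ pre j, G[j] ≥ G[i] + 1)` exists, and its `j`-th
component equals the maximum length of a strictly increasing subsequence of `A` ending at
index `j` (a sequence of length `m+1` is encoded as a strictly monotone `f : Fin (m+1) → Fin n`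
with `A ∘ f` strictly monotone and last element `j`). -/
theorem stmt7 (n : ℕ) (A : Fin n → ℤ) (hA : Function.Injective A)
    (L : Set (Fin n → ℕ)) (hL : L = {G | ∀ i, G i ≤ n})
    (B : (Fin n → ℕ) → Prop)
    (hB : ∀ G, B G ↔ (∀ j, 1 ≤ G j) ∧ ∀ j i : Fin n, i < j → A i < A j → G i + 1 ≤ G j) :
    ∃ Gs : Fin n → ℕ, (Gs ∈ L ∧ B Gs ∧ ∀ H ∈ L, B H → Gs ≤ H) ∧
      ∀ j : Fin n, Gs j = 1 + sSup {m : ℕ | ∃ f : Fin (m + 1) → Fin n,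
        StrictMono f ∧ StrictMono (A ∘ f) ∧ f (Fin.last m) = j} := by
  set S : Fin n → Set ℕ := fun j => {m : ℕ | ∃ f : Fin (m + 1) → Fin n,
    StrictMono f ∧ StrictMono (A ∘ f) ∧ f (Fin.last m) = j} with hS
  have hne : ∀ j, (S j).Nonempty := by
    intro j
    exact ⟨0, fun _ => j, fin_one_strictMono _, fin_one_strictMono _, rfl⟩
  have hbdd : ∀ j, BddAbove (S j) := by
    intro j
    refine ⟨n, fun m hm => ?_⟩
    obtain ⟨f, hf, -, -⟩ := hm
    have := Fintype.card_le_of_injective f hf.injective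
    simp at this
    omega
  have hmem : ∀ j, sSup (S j) ∈ S j := fun j => Nat.sSup_mem (hne j) (hbdd j)
  set Gs : Fin n → ℕ := fun j => 1 + sSup (S j) with hGs
  have hBstep : ∀ j i : Fin n, i < j → A i < A j → Gs i + 1 ≤ Gs j := by
    intro j i hij hAij
    obtain ⟨f, hf, hAf, hlast⟩ := hmem i
    have hfx : ∀ k, f k < j := by
      intro k
      have h1 : f k ≤ f (Fin.last _) := hf.monotone (Fin.le_last k)
      rw [hlast] at h1
      exact lt_of_le_of_lt h1 hij
    have hAfx : ∀ k, (A ∘ f) k < A j := by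
      intro k
      have h1 : (A ∘ f) k ≤ (A ∘ f) (Fin.last _) := hAf.monotone (Fin.le_last k)
      simp only [Function.comp_apply] at h1 ⊢
      rw [hlast] at h1
      exact lt_of_le_of_lt h1 hAij
    have hmemj : sSup (S i) + 1 ∈ S j := by
      refine ⟨Fin.snoc f j, snoc_strictMono' hf hfx, ?_, by simp⟩
      rw [Fin.comp_snoc]
      exact snoc_strictMono' hAf hAfx
    have : sSup (S i) + 1 ≤ sSup (S j) := le_csSup (hbdd j) hmemj
    simp only [hGs]; omega
  refine ⟨Gs, ⟨?_, ?_, ?_⟩, fun j => rfl⟩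
  · rw [hL]
    intro j
    have h1 : sSup (S j) ∈ S j := hmem j
    obtain ⟨f, hf, -, -⟩ := h1
    have := Fintype.card_le_of_injective f hf.injective
    simp only [hGs]
    simp at this
    omega
  · rw [hB]
    exact ⟨fun j => by simp [hGs], hBstep⟩
  · intro H _ hH
    rw [hB] at hH
    obtain ⟨hH1, hH2⟩ := hH
    intro j
    obtain ⟨f, hf, hAf, hlast⟩ := hmem j
    have key : ∀ k : Fin (sSup (S j) + 1), (k : ℕ) + 1 ≤ H (f k) := by
      intro k
      induction k using Fin.induction with
      | zero => exact hH1 _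
      | succ k ih =>
        have h2 := hH2 (f k.succ) (f k.castSucc) (hf Fin.castSucc_lt_succ)
          (hAf Fin.castSucc_lt_succ)
        have hkc : (k.castSucc : ℕ) = (k : ℕ) := rfl
        simp only [Fin.val_succ]
        omega
    have := key (Fin.last _)
    rw [hlast] at this
    simp only [hGs, Fin.val_last] at this ⊢
    omega
end

section
/- Let A be an array of n integers. For each index j, let c(j) denote the maximum length of a strictly increasing subsequence of A[1..j] consisting entirely of odd integers and ending at index j (with c(j) = 0 if A[j] is even). Let T be a vector of natural numbers of dimension n and let L be the lattice of all vectors G of natural numbers of dimension n with G[i] ≤ T[i] for every i, ordered componentwise. Then the predicate B(G) ≡ (∀ j : G[j] ≥ c(j)) is lattice-linear with respect to L. -/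
/-- Let `c j` be the maximum length of a strictly increasing subsequence of odd
integers of `A` ending at index `j` (with `c j = 0` if `A j` is even). Then the predicate
`B(G) ≡ ∀ j, G[j] ≥ c j` is lattice-linear with respect to the lattice `L` of vectors of
natural numbers bounded componentwise by `T`. -/
theorem stmt8 (n : ℕ) (A : Fin n → ℤ)
    (c : Fin n → ℕ)
    (hc : ∀ j, c j = if Odd (A j) then
        1 + sSup {m : ℕ | ∃ f : Fin (m + 1) → Fin n, StrictMono f ∧ StrictMono (A ∘ f) ∧
          (∀ a, Odd (A (f a))) ∧ f (Fin.last m) = j}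
      else 0)
    (T : Fin n → ℕ) (L : Set (Fin n → ℕ)) (hL : L = {G | ∀ i, G i ≤ T i})
    (B : (Fin n → ℕ) → Prop) (hB : ∀ G, B G ↔ ∀ j, c j ≤ G j) :
    ∀ G ∈ L, ¬ B G → ∃ j : Fin n, ∀ H ∈ L, G ≤ H → H j = G j → ¬ B H := by
  intro G _ hG
  rw [hB] at hG
  push_neg at hG
  obtain ⟨j, hj⟩ := hG
  exact ⟨j, fun H _ _ hHj hBH => absurd (hHj ▸ (hB H).mp hBH j) (not_le.mpr hj)⟩
end

section
/- Let A be an array of n integers, let k be a positive integer, and define pre_k(j) = { i | 1 ≤ i < j and A[i] + k ≤ A[j] } for each index j ∈ {1,…,n}. Let T be a vector of natural numbers of dimension n and let L be the lattice of all vectors G of natural numbers of dimension n with G[i] ≤ T[i] for every i, ordered componentwise. Then the predicate B(G) ≡ (∀ j : G[j] ≥ 1) ∧ (∀ j : ∀ i ∈ pre_k(j) : G[j] ≥ G[i] + 1), which expresses that G[j] is at least the length of the longest increasing subsequence ending at j in which each element exceeds the previous one by at least k, is lattice-linear with respect to L. -/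
/-- For an array `A` of `n` integers, a positive integer `k`, and
`pre_k j = {i | i < j ∧ A i + k ≤ A j}`, the predicate
`B(G) ≡ (∀ j, G[j] ≥ 1) ∧ (∀ j, ∀ i ∈ pre_k j, G[j] ≥ G[i] + 1)` is lattice-linear with
respect to the lattice `L` of vectors of natural numbers bounded componentwise by `T`. -/
theorem stmt9 (n : ℕ) (A : Fin n → ℤ) (k : ℕ) (hk : 0 < k)
    (T : Fin n → ℕ) (L : Set (Fin n → ℕ)) (hL : L = {G | ∀ i, G i ≤ T i})
    (B : (Fin n → ℕ) → Prop)
    (hB : ∀ G, B G ↔ (∀ j, 1 ≤ G j) ∧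
      ∀ j i : Fin n, i < j → A i + (k : ℤ) ≤ A j → G i + 1 ≤ G j) :
    ∀ G ∈ L, ¬ B G → ∃ j : Fin n, ∀ H ∈ L, G ≤ H → H j = G j → ¬ B H := by
  intro G _ hG
  rw [hB] at hG
  push_neg at hG
  rcases Classical.em (∀ j, 1 ≤ G j) with h1 | h1
  · obtain ⟨j, i, hij, hA, hlt⟩ := hG h1
    refine ⟨j, fun H _ hGH hHj hBH => ?_⟩
    obtain ⟨_, h2⟩ := (hB H).mp hBH
    have ha := h2 j i hij hA
    have hb : G i ≤ H i := hGH i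
    omega
  · push_neg at h1
    obtain ⟨j, hj⟩ := h1
    refine ⟨j, fun H _ hGH hHj hBH => ?_⟩
    obtain ⟨h1', _⟩ := (hB H).mp hBH
    have := h1' j
    omega
end

section
/- Let p[1..n] be nonnegative real frequencies and for 1 ≤ i ≤ j ≤ n let s(i,j) = Σ_{k=i}^{j} p[k], with s(i,j) = 0 when i > j. Index the lattice by pairs (i,j) with 1 ≤ i ≤ j ≤ n: let T assign a nonnegative real bound to each pair and let L be the lattice of all functions G from such pairs to nonnegative reals with G[i,j] ≤ T[i,j], ordered componentwise; extend G by the convention G[i,j] = 0 whenever i > j. Then the predicate B(G) ≡ ∀ (i,j) with i < j : G[i,j] ≥ min_{i ≤ k < j} ( G[i,k−1] + s(i,j) + G[k+1,j] ) is lattice-linear with respect to L. -/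
/-- The optimal binary search tree predicate
`B(G) ≡ ∀ (i,j), i < j → G[i,j] ≥ min_{i ≤ k < j} (G[i,k-1] + s(i,j) + G[k+1,j])`
is lattice-linear with respect to the lattice `L` of functions from pairs `(i,j)` with
`1 ≤ i ≤ j ≤ n` to nonnegative reals bounded componentwise by `T` (extended by the
convention `G[i,j] = 0` whenever the pair is not a valid index). -/
theorem stmt10 (n : ℕ) (p : ℕ → ℝ) (hp : ∀ k, 1 ≤ k → k ≤ n → 0 ≤ p k)
    (s : ℕ → ℕ → ℝ) (hs : ∀ i j, s i j = ∑ k ∈ Finset.Icc i j, p k)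
    (T : ℕ → ℕ → ℝ)
    (L : Set (ℕ → ℕ → ℝ))
    (hL : L = {G | (∀ i j, 1 ≤ i → i ≤ j → j ≤ n → 0 ≤ G i j ∧ G i j ≤ T i j) ∧
                    ∀ i j, ¬ (1 ≤ i ∧ i ≤ j ∧ j ≤ n) → G i j = 0})
    (B : (ℕ → ℕ → ℝ) → Prop)
    (hB : ∀ G, B G ↔ ∀ i j, 1 ≤ i → i < j → j ≤ n →
      sInf {x : ℝ | ∃ k, i ≤ k ∧ k < j ∧ x = G i (k - 1) + s i j + G (k + 1) j} ≤ G i j) :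
    ∀ G ∈ L, ¬ B G → ∃ i j, 1 ≤ i ∧ i ≤ j ∧ j ≤ n ∧
      ∀ H ∈ L, (∀ a b, 1 ≤ a → a ≤ b → b ≤ n → G a b ≤ H a b) → H i j = G i j → ¬ B H := by
  intro G hG hBG
  rw [hB] at hBG
  push_neg at hBG
  obtain ⟨i, j, hi, hij, hjn, hlt⟩ := hBG
  rw [hL] at hG
  -- nonnegativity of G everywhere
  have hGnn : ∀ a b, 0 ≤ G a b := by
    intro a b
    by_cases h : 1 ≤ a ∧ a ≤ b ∧ b ≤ n
    · exact (hG.1 a b h.1 h.2.1 h.2.2).1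
    · rw [hG.2 a b h]
  have hsnn : 0 ≤ s i j := by
    rw [hs]
    apply Finset.sum_nonneg
    intro k hk
    rw [Finset.mem_Icc] at hk
    exact hp k (hi.trans hk.1) (hk.2.trans hjn)
  refine ⟨i, j, hi, hij.le, hjn, ?_⟩
  intro H hH hGH hHij
  rw [hL] at hH
  have hGHall : ∀ a b, G a b ≤ H a b := by
    intro a b
    by_cases h : 1 ≤ a ∧ a ≤ b ∧ b ≤ n
    · exact hGH a b h.1 h.2.1 h.2.2
    · rw [hG.2 a b h, hH.2 a b h]
  rw [hB]
  push_neg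
  refine ⟨i, j, hi, hij, hjn, ?_⟩
  rw [hHij]
  have hbdd : BddBelow {x : ℝ | ∃ k, i ≤ k ∧ k < j ∧ x = G i (k - 1) + s i j + G (k + 1) j} := by
    refine ⟨0, ?_⟩
    rintro x ⟨k, _, _, rfl⟩
    have := hGnn i (k - 1)
    have := hGnn (k + 1) j
    linarith
  refine lt_of_lt_of_le hlt (le_csInf ⟨H i (i - 1) + s i j + H (i + 1) j, i, le_refl i, hij, rfl⟩ ?_)
  rintro x ⟨k, hik, hkj, rfl⟩
  have : G i (k - 1) + s i j + G (k + 1) j ≤ H i (k - 1) + s i j + H (k + 1) j := by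
    have := hGHall i (k - 1)
    have := hGHall (k + 1) j
    linarith
  refine le_trans (csInf_le hbdd ⟨k, hik, hkj, rfl⟩) this
end

section
/- Let p[1..n] be nonnegative real frequencies, let s(i,j) = Σ_{k=i}^{j} p[k] (with s(i,j) = 0 when i > j), and fix a key x ∈ {1,…,n}. Index the lattice by pairs (i,j) with 1 ≤ i ≤ j ≤ n: let T assign a nonnegative real bound to each pair and let L be the lattice of all functions G from such pairs to nonnegative reals with G[i,j] ≤ T[i,j], ordered componentwise; extend G by the convention G[i,j] = 0 whenever i > j. Then the predicate B(G) ≡ ∀ (i,j) with i < j : G[i,j] ≥ min_{i ≤ k < j, k ≠ x} ( G[i,k−1] + s(i,j) + G[k+1,j] ), expressing the optimal binary search tree constraint under the restriction that key x is never a parent (never a root of a subtree on more than one key), is lattice-linear with respect to L. -/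
/-- The constrained optimal binary search tree predicate, where key `x` is never
a parent, `B(G) ≡ ∀ (i,j), i < j → G[i,j] ≥ min_{i ≤ k < j, k ≠ x} (G[i,k-1] + s(i,j) + G[k+1,j])`,
is lattice-linear with respect to the lattice `L` of functions from pairs `(i,j)` with
`1 ≤ i ≤ j ≤ n` to nonnegative reals bounded componentwise by `T` (extended by the
convention `G[i,j] = 0` whenever the pair is not a valid index). -/
theorem stmt11 (n : ℕ) (p : ℕ → ℝ) (hp : ∀ k, 1 ≤ k → k ≤ n → 0 ≤ p k)
    (s : ℕ → ℕ → ℝ) (hs : ∀ i j, s i j = ∑ k ∈ Finset.Icc i j, p k)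
    (x : ℕ) (hx : 1 ≤ x ∧ x ≤ n)
    (T : ℕ → ℕ → ℝ)
    (L : Set (ℕ → ℕ → ℝ))
    (hL : L = {G | (∀ i j, 1 ≤ i → i ≤ j → j ≤ n → 0 ≤ G i j ∧ G i j ≤ T i j) ∧
                    ∀ i j, ¬ (1 ≤ i ∧ i ≤ j ∧ j ≤ n) → G i j = 0})
    (B : (ℕ → ℕ → ℝ) → Prop)
    (hB : ∀ G, B G ↔ ∀ i j, 1 ≤ i → i < j → j ≤ n →
      sInf {y : ℝ | ∃ k, i ≤ k ∧ k < j ∧ k ≠ x ∧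
        y = G i (k - 1) + s i j + G (k + 1) j} ≤ G i j) :
    ∀ G ∈ L, ¬ B G → ∃ i j, 1 ≤ i ∧ i ≤ j ∧ j ≤ n ∧
      ∀ H ∈ L, (∀ a b, 1 ≤ a → a ≤ b → b ≤ n → G a b ≤ H a b) → H i j = G i j → ¬ B H := by
  intro G hG hnB
  rw [hB] at hnB
  push_neg at hnB
  obtain ⟨i, j, hi, hij, hjn, hlt⟩ := hnB
  rw [hL] at hG
  obtain ⟨hG1, hG2⟩ := hG
  have hGnn : ∀ a b, 0 ≤ G a b := by
    intro a b
    by_cases h : 1 ≤ a ∧ a ≤ b ∧ b ≤ n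
    · exact (hG1 a b h.1 h.2.1 h.2.2).1
    · rw [hG2 a b h]
  refine ⟨i, j, hi, hij.le, hjn, ?_⟩
  intro H hH hGH hHij
  rw [hL] at hH
  obtain ⟨hH1, hH2⟩ := hH
  rw [hB]
  push_neg
  refine ⟨i, j, hi, hij, hjn, ?_⟩
  rw [hHij]
  set SG := {y : ℝ | ∃ k, i ≤ k ∧ k < j ∧ k ≠ x ∧ y = G i (k - 1) + s i j + G (k + 1) j}
    with hSG
  set SH := {y : ℝ | ∃ k, i ≤ k ∧ k < j ∧ k ≠ x ∧ y = H i (k - 1) + s i j + H (k + 1) j}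
    with hSH
  have hsnn : 0 ≤ s i j := by
    rw [hs]
    refine Finset.sum_nonneg fun k hk => ?_
    rw [Finset.mem_Icc] at hk
    exact hp k (hi.trans hk.1) (hk.2.trans hjn)
  rcases Set.eq_empty_or_nonempty SH with hE | hNE
  · have hGE : SG = ∅ := by
      ext y
      simp only [hSG, Set.mem_setOf_eq, Set.mem_empty_iff_false, iff_false]
      rintro ⟨k, h1, h2, h3, _⟩
      have hmem : (H i (k - 1) + s i j + H (k + 1) j) ∈ SH := ⟨k, h1, h2, h3, rfl⟩
      rw [hE] at hmem
      exact hmem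
    rw [hGE] at hlt
    rw [hE]
    exact hlt
  · have hbdd : BddBelow SG := by
      refine ⟨0, ?_⟩
      rintro z ⟨m, hm1, hm2, hm3, rfl⟩
      have := hGnn i (m - 1)
      have := hGnn (m + 1) j
      linarith
    refine lt_of_lt_of_le hlt (le_csInf hNE ?_)
    rintro y ⟨k, h1, h2, h3, rfl⟩
    have hmem : (G i (k - 1) + s i j + G (k + 1) j) ∈ SG := ⟨k, h1, h2, h3, rfl⟩
    have step1 : sInf SG ≤ G i (k - 1) + s i j + G (k + 1) j := csInf_le hbdd hmem
    have hleft : G i (k - 1) ≤ H i (k - 1) := by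
      by_cases h : i ≤ k - 1
      · exact hGH i (k - 1) hi h (le_trans (Nat.sub_le k 1) (le_trans h2.le hjn))
      · have hinv : ¬ (1 ≤ i ∧ i ≤ k - 1 ∧ k - 1 ≤ n) := fun hc => h hc.2.1
        rw [hG2 i (k - 1) hinv, hH2 i (k - 1) hinv]
    have hright : G (k + 1) j ≤ H (k + 1) j := by
      by_cases h : k + 1 ≤ j
      · exact hGH (k + 1) j (Nat.le_add_left 1 k) h hjn
      · have hinv : ¬ (1 ≤ k + 1 ∧ k + 1 ≤ j ∧ j ≤ n) := fun hc => h hc.2.1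
        rw [hG2 (k + 1) j hinv, hH2 (k + 1) j hinv]
    linarith
end

section
/- Let p[1..n] be nonnegative real frequencies and let s(i,j) = Σ_{k=i}^{j} p[k] (with s(i,j) = 0 when i > j). Index the lattice by pairs (i,j) with 1 ≤ i ≤ j ≤ n: let T assign a nonnegative real bound to each pair and let L be the lattice of all functions G from such pairs to nonnegative reals with G[i,j] ≤ T[i,j], ordered componentwise; extend G by the convention G[i,j] = 0 whenever i > j. Then the predicate B(G) ≡ ∀ (i,j) with i < j : G[i,j] ≥ min_{i ≤ k < j, |(k−i) − (j−k)| ≤ 1} ( G[i,k−1] + s(i,j) + G[k+1,j] ), expressing the optimal binary search tree constraint under the restriction that the sizes of the left and right subtrees differ by at most 1, is lattice-linear with respect to L (the restriction simply restricts the values of k over which the minimum is taken, and the right-hand side remains a monotone function of G). -/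
/-- The constrained optimal binary search tree predicate, where the sizes of the
left and right subtrees differ by at most one,
`B(G) ≡ ∀ (i,j), i < j → G[i,j] ≥ min_{i ≤ k < j, |(k-i)-(j-k)| ≤ 1} (G[i,k-1] + s(i,j) + G[k+1,j])`,
is lattice-linear with respect to the lattice `L` of functions from pairs `(i,j)` with
`1 ≤ i ≤ j ≤ n` to nonnegative reals bounded componentwise by `T` (extended by the
convention `G[i,j] = 0` whenever the pair is not a valid index). -/
theorem stmt12 (n : ℕ) (p : ℕ → ℝ) (hp : ∀ k, 1 ≤ k → k ≤ n → 0 ≤ p k)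
    (s : ℕ → ℕ → ℝ) (hs : ∀ i j, s i j = ∑ k ∈ Finset.Icc i j, p k)
    (T : ℕ → ℕ → ℝ)
    (L : Set (ℕ → ℕ → ℝ))
    (hL : L = {G | (∀ i j, 1 ≤ i → i ≤ j → j ≤ n → 0 ≤ G i j ∧ G i j ≤ T i j) ∧
                    ∀ i j, ¬ (1 ≤ i ∧ i ≤ j ∧ j ≤ n) → G i j = 0})
    (B : (ℕ → ℕ → ℝ) → Prop)
    (hB : ∀ G, B G ↔ ∀ i j, 1 ≤ i → i < j → j ≤ n →
      sInf {y : ℝ | ∃ k, i ≤ k ∧ k < j ∧ |((k : ℤ) - (i : ℤ)) - ((j : ℤ) - (k : ℤ))| ≤ 1 ∧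
        y = G i (k - 1) + s i j + G (k + 1) j} ≤ G i j) :
    ∀ G ∈ L, ¬ B G → ∃ i j, 1 ≤ i ∧ i ≤ j ∧ j ≤ n ∧
      ∀ H ∈ L, (∀ a b, 1 ≤ a → a ≤ b → b ≤ n → G a b ≤ H a b) → H i j = G i j → ¬ B H := by
  subst hL
  intro G hG hBG
  -- nonnegativity of any lattice element at any pair
  have nonneg : ∀ X : ℕ → ℕ → ℝ,
      ((∀ i j, 1 ≤ i → i ≤ j → j ≤ n → 0 ≤ X i j ∧ X i j ≤ T i j) ∧
        ∀ i j, ¬ (1 ≤ i ∧ i ≤ j ∧ j ≤ n) → X i j = 0) → ∀ a b, 0 ≤ X a b := by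
    intro X hX a b
    by_cases h : 1 ≤ a ∧ a ≤ b ∧ b ≤ n
    · exact (hX.1 a b h.1 h.2.1 h.2.2).1
    · rw [hX.2 a b h]
  have hsnn : ∀ i j, 1 ≤ i → j ≤ n → 0 ≤ s i j := by
    intro i j hi hj
    rw [hs]
    apply Finset.sum_nonneg
    intro k hk
    rw [Finset.mem_Icc] at hk
    exact hp k (le_trans hi hk.1) (le_trans hk.2 hj)
  rw [hB] at hBG
  push_neg at hBG
  obtain ⟨i, j, hi, hij, hjn, hlt⟩ := hBG
  refine ⟨i, j, hi, le_of_lt hij, hjn, ?_⟩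
  intro H hH hGH hHij
  rw [hB]
  push_neg
  refine ⟨i, j, hi, hij, hjn, ?_⟩
  rw [hHij]
  set SG := {y : ℝ | ∃ k, i ≤ k ∧ k < j ∧ |((k : ℤ) - (i : ℤ)) - ((j : ℤ) - (k : ℤ))| ≤ 1 ∧
        y = G i (k - 1) + s i j + G (k + 1) j} with hSG
  set SH := {y : ℝ | ∃ k, i ≤ k ∧ k < j ∧ |((k : ℤ) - (i : ℤ)) - ((j : ℤ) - (k : ℤ))| ≤ 1 ∧
        y = H i (k - 1) + s i j + H (k + 1) j} with hSH
  -- pointwise comparison everywhere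
  have hle : ∀ a b, G a b ≤ H a b := by
    intro a b
    by_cases h : 1 ≤ a ∧ a ≤ b ∧ b ≤ n
    · exact hGH a b h.1 h.2.1 h.2.2
    · rw [hG.2 a b h, hH.2 a b h]
  have hbddG : BddBelow SG := by
    refine ⟨0, ?_⟩
    rintro y ⟨k, hk1, hk2, hk3, rfl⟩
    have := nonneg G hG i (k - 1)
    have := nonneg G hG (k + 1) j
    have := hsnn i j hi hjn
    positivity
  -- SG must be nonempty
  have hGij : 0 ≤ G i j := nonneg G hG i j
  have hne : SG.Nonempty := by
    by_contra hempty
    rw [Set.not_nonempty_iff_eq_empty] at hempty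
    rw [hempty, Real.sInf_empty] at hlt
    linarith
  obtain ⟨y0, k0, hk01, hk02, hk03, hy0⟩ := hne
  have hneH : SH.Nonempty := ⟨H i (k0 - 1) + s i j + H (k0 + 1) j,
    k0, hk01, hk02, hk03, rfl⟩
  have hmono : sInf SG ≤ sInf SH := by
    apply le_csInf hneH
    rintro y ⟨k, hk1, hk2, hk3, rfl⟩
    have hmem : G i (k - 1) + s i j + G (k + 1) j ∈ SG := ⟨k, hk1, hk2, hk3, rfl⟩
    have h1 := hle i (k - 1)
    have h2 := hle (k + 1) j
    calc sInf SG ≤ G i (k - 1) + s i j + G (k + 1) j := csInf_le hbddG hmem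
      _ ≤ H i (k - 1) + s i j + H (k + 1) j := by linarith
  linarith
end

section
/- Let m[0..n] be positive reals, where matrix M_i has dimension m[i−1] × m[i]. Index the lattice by pairs (i,j) with 1 ≤ i ≤ j ≤ n: let T assign a nonnegative real bound to each pair and let L be the lattice of all functions G from such pairs to nonnegative reals with G[i,j] ≤ T[i,j], ordered componentwise. Then the matrix chain multiplication predicate B(G) ≡ ∀ (i,j) with i < j : G[i,j] ≥ min_{i ≤ k < j} ( G[i,k] + m[i−1]·m[k]·m[j] + G[k+1,j] ) is lattice-linear with respect to L. -/
/-- For positive matrix dimensions `m[0..n]` (matrix `Mᵢ` has dimension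
`m[i-1] × m[i]`), the matrix chain multiplication predicate
`B(G) ≡ ∀ (i,j), i < j → G[i,j] ≥ min_{i ≤ k < j} (G[i,k] + m[i-1]·m[k]·m[j] + G[k+1,j])`
is lattice-linear with respect to the lattice `L` of functions from pairs `(i,j)` with
`1 ≤ i ≤ j ≤ n` to nonnegative reals bounded componentwise by `T`. -/
theorem stmt13 (n : ℕ) (m : ℕ → ℝ) (hm : ∀ k, k ≤ n → 0 < m k)
    (T : ℕ → ℕ → ℝ)
    (L : Set (ℕ → ℕ → ℝ))
    (hL : L = {G | ∀ i j, 1 ≤ i → i ≤ j → j ≤ n → 0 ≤ G i j ∧ G i j ≤ T i j})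
    (B : (ℕ → ℕ → ℝ) → Prop)
    (hB : ∀ G, B G ↔ ∀ i j, 1 ≤ i → i < j → j ≤ n →
      sInf {x : ℝ | ∃ k, i ≤ k ∧ k < j ∧
        x = G i k + m (i - 1) * m k * m j + G (k + 1) j} ≤ G i j) :
    ∀ G ∈ L, ¬ B G → ∃ i j, 1 ≤ i ∧ i ≤ j ∧ j ≤ n ∧
      ∀ H ∈ L, (∀ a b, 1 ≤ a → a ≤ b → b ≤ n → G a b ≤ H a b) → H i j = G i j → ¬ B H := by
  intro G hG hnB
  rw [hB] at hnB
  push_neg at hnB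
  obtain ⟨i, j, hi1, hij, hjn, hlt⟩ := hnB
  refine ⟨i, j, hi1, hij.le, hjn, ?_⟩
  intro H hH hGH hHij
  rw [hB]
  push_neg
  refine ⟨i, j, hi1, hij, hjn, ?_⟩
  subst hL
  -- the G-infimum is a lower bound for the H-set
  have hlb : ∀ x ∈ {x : ℝ | ∃ k, i ≤ k ∧ k < j ∧
      x = H i k + m (i - 1) * m k * m j + H (k + 1) j},
      sInf {x : ℝ | ∃ k, i ≤ k ∧ k < j ∧
        x = G i k + m (i - 1) * m k * m j + G (k + 1) j} ≤ x := by
    rintro x ⟨k, hik, hkj, rfl⟩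
    have hk1 : 1 ≤ k := le_trans hi1 hik
    have hkn : k ≤ n := le_trans hkj.le hjn
    have hk1j : k + 1 ≤ j := hkj
    have h1 : G i k ≤ H i k := hGH i k hi1 hik hkn
    have h2 : G (k + 1) j ≤ H (k + 1) j := hGH (k + 1) j (by omega) hk1j hjn
    have hmem : G i k + m (i - 1) * m k * m j + G (k + 1) j ∈
        {x : ℝ | ∃ k, i ≤ k ∧ k < j ∧
          x = G i k + m (i - 1) * m k * m j + G (k + 1) j} := ⟨k, hik, hkj, rfl⟩
    have hbdd : BddBelow {x : ℝ | ∃ k, i ≤ k ∧ k < j ∧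
        x = G i k + m (i - 1) * m k * m j + G (k + 1) j} := by
      refine ⟨0, ?_⟩
      rintro y ⟨k', hik', hk'j, rfl⟩
      have hk'n : k' ≤ n := le_trans hk'j.le hjn
      have hg1 := (hG i k' hi1 hik' hk'n).1
      have hg2 := (hG (k' + 1) j (by omega) hk'j hjn).1
      have hmpos : 0 < m (i - 1) * m k' * m j :=
        mul_pos (mul_pos (hm _ (by omega)) (hm _ hk'n)) (hm _ hjn)
      linarith
    calc sInf _ ≤ G i k + m (i - 1) * m k * m j + G (k + 1) j := csInf_le hbdd hmem
      _ ≤ H i k + m (i - 1) * m k * m j + H (k + 1) j := by linarith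
  have hne : {x : ℝ | ∃ k, i ≤ k ∧ k < j ∧
      x = H i k + m (i - 1) * m k * m j + H (k + 1) j}.Nonempty :=
    ⟨_, i, le_refl i, hij, rfl⟩
  have := le_csInf hne hlb
  rw [hHij]
  linarith
end

section
/- Let n items have weights w[1..n] ∈ ℕ and values v[1..n] ∈ ℕ, and let W ∈ ℕ be the knapsack capacity. Index the lattice by pairs (i,u) with 0 ≤ i ≤ n and 0 ≤ u ≤ W: let T assign a natural number bound to each pair and let L be the lattice of all functions G from such pairs to natural numbers with G[i,u] ≤ T[i,u], ordered componentwise. Then the predicate B(G) ≡ ∀ (i,u) with 1 ≤ i ≤ n, 0 ≤ u ≤ W and w[i] ≤ u : G[i,u] ≥ max( G[i−1, u−w[i]] + v[i], G[i−1, u] ) is lattice-linear with respect to L. -/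
/-- For `n` items with natural-number weights `w` and values `v` and knapsack
capacity `W`, the predicate
`B(G) ≡ ∀ (i,u), 1 ≤ i ≤ n → u ≤ W → w[i] ≤ u → G[i,u] ≥ max (G[i-1,u-w[i]] + v[i]) (G[i-1,u])`
is lattice-linear with respect to the lattice `L` of functions from pairs `(i,u)` with
`0 ≤ i ≤ n`, `0 ≤ u ≤ W` to natural numbers bounded componentwise by `T`. -/
theorem stmt14 (n W : ℕ) (w v : ℕ → ℕ)
    (T : ℕ → ℕ → ℕ)
    (L : Set (ℕ → ℕ → ℕ)) (hL : L = {G | ∀ i u, i ≤ n → u ≤ W → G i u ≤ T i u})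
    (B : (ℕ → ℕ → ℕ) → Prop)
    (hB : ∀ G, B G ↔ ∀ i u, 1 ≤ i → i ≤ n → u ≤ W → w i ≤ u →
      max (G (i - 1) (u - w i) + v i) (G (i - 1) u) ≤ G i u) :
    ∀ G ∈ L, ¬ B G → ∃ i u, i ≤ n ∧ u ≤ W ∧
      ∀ H ∈ L, (∀ a b, a ≤ n → b ≤ W → G a b ≤ H a b) → H i u = G i u → ¬ B H := by
  intro G _ hGB
  rw [hB] at hGB
  push_neg at hGB
  obtain ⟨i, u, h1, hin, huW, hwu, hlt⟩ := hGB
  refine ⟨i, u, hin, huW, ?_⟩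
  intro H _ hGH hHG hBH
  rw [hB] at hBH
  have := hBH i u h1 hin huW hwu
  have h2 : G (i-1) (u - w i) ≤ H (i-1) (u - w i) :=
    hGH _ _ (le_trans (Nat.sub_le _ _) hin) (le_trans (Nat.sub_le _ _) huW)
  have h3 : G (i-1) u ≤ H (i-1) u :=
    hGH _ _ (le_trans (Nat.sub_le _ _) hin) huW
  omega
end

section
/- Let n items have weights w[1..n] ∈ ℕ and values v[1..n] ∈ ℕ, let W ∈ ℕ be the knapsack capacity, and fix an item a ∈ {1,…,n}. Index the lattice by pairs (i,u) with 0 ≤ i ≤ n and 0 ≤ u ≤ W: let T assign a natural number bound to each pair and let L be the lattice of all functions G from such pairs to natural numbers with G[i,u] ≤ T[i,u], ordered componentwise. Then the predicate B(G) ≡ ∀ (i,u) with 1 ≤ i ≤ n, i ≠ a, 0 ≤ u ≤ W : ( if w[i] ≤ u then G[i,u] ≥ max( G[i−1, u−w[i]] + v[i], G[i−1, u] ) else G[i,u] ≥ G[i−1, u] ) is lattice-linear with respect to L. -/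
/-- For `n` items with natural-number weights `w` and values `v`, knapsack
capacity `W`, and a fixed item `a`, the predicate
`B(G) ≡ ∀ (i,u), 1 ≤ i ≤ n → i ≠ a → u ≤ W →
  (if w[i] ≤ u then G[i,u] ≥ max (G[i-1,u-w[i]] + v[i]) (G[i-1,u]) else G[i,u] ≥ G[i-1,u])`
is lattice-linear with respect to the lattice `L` of functions from pairs `(i,u)` with
`0 ≤ i ≤ n`, `0 ≤ u ≤ W` to natural numbers bounded componentwise by `T`. -/
theorem stmt15 (n W : ℕ) (w v : ℕ → ℕ) (a : ℕ) (ha : 1 ≤ a ∧ a ≤ n)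
    (T : ℕ → ℕ → ℕ)
    (L : Set (ℕ → ℕ → ℕ)) (hL : L = {G | ∀ i u, i ≤ n → u ≤ W → G i u ≤ T i u})
    (B : (ℕ → ℕ → ℕ) → Prop)
    (hB : ∀ G, B G ↔ ∀ i u, 1 ≤ i → i ≤ n → i ≠ a → u ≤ W →
      ((w i ≤ u → max (G (i - 1) (u - w i) + v i) (G (i - 1) u) ≤ G i u) ∧
       (¬ w i ≤ u → G (i - 1) u ≤ G i u))) :
    ∀ G ∈ L, ¬ B G → ∃ i u, i ≤ n ∧ u ≤ W ∧
      ∀ H ∈ L, (∀ a' b, a' ≤ n → b ≤ W → G a' b ≤ H a' b) → H i u = G i u → ¬ B H := by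
  intro G _ hGB
  rw [hB] at hGB
  push_neg at hGB
  obtain ⟨i, u, h1, h2, h3, h4, hviol⟩ := hGB
  refine ⟨i, u, h2, h4, ?_⟩
  intro H _ hle hfix hBH
  rw [hB] at hBH
  have hi1 : i - 1 ≤ n := le_trans (Nat.sub_le i 1) h2
  have hu1 : u - w i ≤ W := le_trans (Nat.sub_le u (w i)) h4
  have h5 := hBH i u h1 h2 h3 h4
  by_cases hwu : w i ≤ u
  · have hv : ¬ (G (i-1) (u - w i) + v i) ⊔ G (i-1) u ≤ G i u := by
      intro hle'
      exact absurd (hviol (fun _ => hle')).1 (not_lt.mpr hwu)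
    have := h5.1 hwu
    have hG1 := hle (i-1) (u - w i) hi1 hu1
    have hG2 := hle (i-1) u hi1 h4
    rw [hfix] at this
    exact hv (le_trans (max_le_max (add_le_add_left hG1 _) hG2) this)
  · have hv := (hviol (fun h => absurd h hwu)).2
    have := h5.2 hwu
    have hG2 := hle (i-1) u hi1 h4
    rw [hfix] at this
    omega
end
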